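/- Assume x_⊥ ≠ 0 (so X₊X₊ᵀ is invertible). For every y ∈ ℝ, the minimum-norm least-squares solution on the augmented data satisfies the recursion X₊ᵀ(X₊X₊ᵀ)⁻¹ Y₊(y) = θ_MN + (x_⊥/‖x_⊥‖²)·(y − x⊤θ_MN). -/

import Mathlib

/-!
For `A` with `A Aᵀ` invertible, `Aᵀ (A Aᵀ)⁻¹ b` is the unique solution of `A v = b` in the row
space of `A`. The candidate `θ_MN + t • x_⊥` lies in the row space of `X₊`, because
`x_⊥ = x - Xᵀ (X Xᵀ)⁻¹ X x`; it solves the first `N` equations since `X θ_MN = Y` and `X x_⊥ = 0`,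
and `t` is chosen to solve the last one, using `x ⬝ᵥ x_⊥ = x_⊥ ⬝ᵥ x_⊥`. Pairing with `x_⊥` also
shows that `X₊ᵀ` is injective, i.e. that `X₊ X₊ᵀ` is invertible.
-/

open Matrix

namespace Matrix

section RightPseudoInverse

variable {K : Type*} [Field K] {m n : Type*} [Fintype m] [Fintype n] (A : Matrix m n K)

theorem transpose_mulVec_dotProduct (z : m → K) (u : n → K) :
    (Aᵀ *ᵥ z) ⬝ᵥ u = z ⬝ᵥ (A *ᵥ u) := by
  rw [dotProduct_comm, dotProduct_mulVec, vecMul_transpose, dotProduct_comm]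

variable [DecidableEq m]

theorem isUnit_det_mul_transpose_iff [LinearOrder K] [IsStrictOrderedRing K] :
    IsUnit (A * Aᵀ).det ↔ LinearMap.ker Aᵀ.mulVecLin = ⊥ := by
  rw [← isUnit_iff_isUnit_det, ← mulVec_injective_iff_isUnit, ← coe_mulVecLin,
    ← LinearMap.ker_eq_bot, ← ker_mulVecLin_transpose_mul_self Aᵀ, transpose_transpose]

theorem one_sub_mul_mulVec [DecidableEq n] (x : n → K) :
    (1 - Aᵀ * (A * Aᵀ)⁻¹ * A) *ᵥ x = x - Aᵀ *ᵥ ((A * Aᵀ)⁻¹ *ᵥ (A *ᵥ x)) := by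
  rw [sub_mulVec, one_mulVec, mulVec_mulVec, mulVec_mulVec, Matrix.mul_assoc]

variable {A}

theorem mul_transpose_mul_inv (hA : IsUnit (A * Aᵀ).det) : A * (Aᵀ * (A * Aᵀ)⁻¹) = 1 := by
  rw [← Matrix.mul_assoc, mul_nonsing_inv _ hA]

theorem transpose_mul_inv_mulVec_eq (hA : IsUnit (A * Aᵀ).det) {w : m → K} {v : n → K}
    {b : m → K} (hw : Aᵀ *ᵥ w = v) (hb : A *ᵥ v = b) : (Aᵀ * (A * Aᵀ)⁻¹) *ᵥ b = v := by
  rw [← hb, ← hw, mulVec_mulVec, mulVec_mulVec, Matrix.mul_assoc (Aᵀ * _), Matrix.mul_assoc Aᵀ,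
    nonsing_inv_mul _ hA, Matrix.mul_one]

theorem mulVec_one_sub_mul_mulVec [DecidableEq n] (hA : IsUnit (A * Aᵀ).det) (x : n → K) :
    A *ᵥ ((1 - Aᵀ * (A * Aᵀ)⁻¹ * A) *ᵥ x) = 0 := by
  rw [mulVec_mulVec, Matrix.mul_sub, Matrix.mul_one, ← Matrix.mul_assoc,
    mul_transpose_mul_inv hA, Matrix.one_mul, sub_self, zero_mulVec]

end RightPseudoInverse

section AppendRow

variable {R : Type*} [CommSemiring R] {N : ℕ} {n : Type*}

theorem of_snoc_mulVec [Fintype n] (X : Matrix (Fin N) n R) (x v : n → R) :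
    of (Fin.snoc X x) *ᵥ v = Fin.snoc (X *ᵥ v) (x ⬝ᵥ v) := by
  ext i
  refine Fin.lastCases ?_ (fun i => ?_) i <;> simp [mulVec, Fin.snoc]

theorem transpose_of_snoc_mulVec_snoc (X : Matrix (Fin N) n R) (x : n → R) (z : Fin N → R)
    (c : R) : (of (Fin.snoc X x))ᵀ *ᵥ Fin.snoc z c = Xᵀ *ᵥ z + c • x := by
  ext j
  simp [mulVec, dotProduct, Fin.sum_univ_castSucc, Fin.snoc, mul_comm]

theorem ker_transpose_of_snoc_eq_bot {K : Type*} [Field K] [Fintype n] {X : Matrix (Fin N) n K}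
    {x u : n → K} (hX : LinearMap.ker Xᵀ.mulVecLin = ⊥) (hu : X *ᵥ u = 0) (hxu : x ⬝ᵥ u ≠ 0) :
    LinearMap.ker (of (Fin.snoc X x))ᵀ.mulVecLin = ⊥ := by
  rw [LinearMap.ker_eq_bot'] at hX ⊢
  intro w hw
  rw [mulVecLin_apply, ← Fin.snoc_init_self w, transpose_of_snoc_mulVec_snoc] at hw
  have hlast : w (Fin.last N) = 0 := by
    simpa [add_dotProduct, transpose_mulVec_dotProduct, hu, hxu] using congrArg (· ⬝ᵥ u) hw
  rw [hlast, zero_smul, add_zero] at hw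
  have hinit := hX _ hw
  funext i
  exact Fin.lastCases hlast (fun i => congrFun hinit i) i

end AppendRow

end Matrix

/-- Recursion for the minimum-norm least-squares solution on the augmented data:
`θ_{N+1} = θ_MN + (x_⊥/‖x_⊥‖²)·(y − xᵀθ_MN)`. -/
theorem mn_solution_recursion {N M : ℕ}
    (X : Matrix (Fin N) (Fin M) ℝ) (Y : Fin N → ℝ) (x : Fin M → ℝ)
    (hX : IsUnit (X * Xᵀ).det)
    (Xplus : Matrix (Fin M) (Fin N) ℝ) (hXplus : Xplus = Xᵀ * (X * Xᵀ)⁻¹)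
    (θMN : Fin M → ℝ) (hθMN : θMN = Xplus.mulVec Y)
    (xperp : Fin M → ℝ)
    (hxperp : xperp = ((1 : Matrix (Fin M) (Fin M) ℝ) - Xplus * X).mulVec x)
    (hxperp_ne : xperp ≠ 0)
    (Xp : Matrix (Fin (N + 1)) (Fin M) ℝ) (hXp : Xp = Matrix.of (Fin.snoc X x))
    (y : ℝ) :
    (Xpᵀ * (Xp * Xpᵀ)⁻¹).mulVec (Fin.snoc Y y) =
      θMN + ((y - x ⬝ᵥ θMN) / (xperp ⬝ᵥ xperp)) • xperp := by
  subst hXplus hXp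
  have hXθ : X *ᵥ θMN = Y := by
    rw [hθMN, mulVec_mulVec, mul_transpose_mul_inv hX, one_mulVec]
  have hXperp : X *ᵥ xperp = 0 := hxperp ▸ mulVec_one_sub_mul_mulVec hX x
  have hx : x = xperp + Xᵀ *ᵥ ((X * Xᵀ)⁻¹ *ᵥ (X *ᵥ x)) := by
    rw [hxperp, one_sub_mul_mulVec, sub_add_cancel]
  have hxx : x ⬝ᵥ xperp = xperp ⬝ᵥ xperp := by
    conv_lhs => rw [hx]
    rw [add_dotProduct, transpose_mulVec_dotProduct, hXperp, dotProduct_zero, add_zero]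
  have hnorm : xperp ⬝ᵥ xperp ≠ 0 := mt dotProduct_self_eq_zero.mp hxperp_ne
  have hA := (isUnit_det_mul_transpose_iff _).2 <| ker_transpose_of_snoc_eq_bot
    ((isUnit_det_mul_transpose_iff X).1 hX) hXperp (hxx ▸ hnorm)
  set t := (y - x ⬝ᵥ θMN) / (xperp ⬝ᵥ xperp)
  refine transpose_mul_inv_mulVec_eq hA
    (w := Fin.snoc ((X * Xᵀ)⁻¹ *ᵥ Y - t • ((X * Xᵀ)⁻¹ *ᵥ (X *ᵥ x))) t) ?_ ?_
  · rw [transpose_of_snoc_mulVec_snoc, hθMN, ← mulVec_mulVec, eq_sub_of_add_eq hx.symm,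
      mulVec_sub, mulVec_smul]
    module
  · rw [of_snoc_mulVec, mulVec_add, mulVec_smul, hXθ, hXperp, smul_zero, add_zero,
      dotProduct_add, dotProduct_smul, hxx, smul_eq_mul, div_mul_cancel₀ _ hnorm, add_sub_cancel]
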